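/- Under the quantile calibration map to the α-weighted barycenter, the overall expected risk E[|ŝ(X) − s(X)|] = P(A=a)·E[|T_a(S_a) − S_a|] + P(A=b)·E[|T_b(S_b) − S_b|] equals 2·α·(1−α)·E[|Q_a(U) − Q_b(U)|] when α = P(A=a), where U is uniform on [0,1]. -/

import Mathlib

/-!
Write `U = F_a(S_a)`. Since `F_a` is strictly increasing on the support `[0,1]` and maps it onto
`[0,1]`, `U` is uniform on `[0,1]` (probability integral transform) and `S_a = Q_a(U)`. Hence
`T_a(S_a) - S_a = (1 - α)(Q_b(U) - Q_a(U))`, so the first risk is `(1 - α) E|Q_a(U) - Q_b(U)|`;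
symmetrically the second is `α E|Q_a(U) - Q_b(U)|`, and weighting by `α` and `1 - α` gives the
claim.
-/

open MeasureTheory Set

theorem Monotone.monotoneOn_of_rightInvOn {α β : Type*} [LinearOrder α] [PartialOrder β]
    {F : α → β} {Q : β → α} {s : Set β} (hF : Monotone F) (hQ : RightInvOn Q F s) :
    MonotoneOn Q s := by
  intro p hp q hq hpq
  by_contra hlt
  have hqp : q ≤ p := by simpa only [hQ hp, hQ hq] using hF (not_le.1 hlt).le
  exact hlt (le_antisymm hpq hqp ▸ le_rfl)

theorem abs_convexComb_sub_left {α x y : ℝ} (hα : α ≤ 1) :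
    |(α * x + (1 - α) * y) - x| = (1 - α) * |x - y| := by
  rw [show (α * x + (1 - α) * y) - x = (1 - α) * (y - x) by ring, abs_mul,
    abs_of_nonneg (sub_nonneg.2 hα), abs_sub_comm]

theorem abs_convexComb_sub_right {α x y : ℝ} (hα : 0 ≤ α) :
    |(α * y + (1 - α) * x) - x| = α * |y - x| := by
  rw [show (α * y + (1 - α) * x) - x = α * (y - x) by ring, abs_mul, abs_of_nonneg hα]

section CDF

variable {Ω : Type*} [MeasurableSpace Ω] {μ : Measure Ω} {S : Ω → ℝ} {F : ℝ → ℝ}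

theorem cdf_eq_zero_of_neg (hS : ∀ ω, 0 ≤ S ω) (hF : ∀ x, F x = (μ {ω | S ω ≤ x}).toReal)
    {x : ℝ} (hx : x < 0) : F x = 0 := by
  have : {ω | S ω ≤ x} = ∅ := eq_empty_of_forall_notMem fun ω h => (hx.trans_le (hS ω)).not_ge h
  simp [hF, this]

variable [IsProbabilityMeasure μ]

theorem monotone_of_cdf (hF : ∀ x, F x = (μ {ω | S ω ≤ x}).toReal) : Monotone F := by
  intro x y hxy
  rw [hF, hF]
  exact ENNReal.toReal_mono (measure_ne_top μ _) (measure_mono fun ω h => le_trans h hxy)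

theorem cdf_mem_Icc (hF : ∀ x, F x = (μ {ω | S ω ≤ x}).toReal) (x : ℝ) : F x ∈ Icc (0 : ℝ) 1 :=
  hF x ▸ ⟨ENNReal.toReal_nonneg, measureReal_le_one⟩

theorem cdf_eq_one_of_one_le (hS : ∀ ω, S ω ≤ 1) (hF : ∀ x, F x = (μ {ω | S ω ≤ x}).toReal)
    {x : ℝ} (hx : 1 ≤ x) : F x = 1 := by
  have : {ω | S ω ≤ x} = univ := eq_univ_of_forall fun ω => (hS ω).trans hx
  simp [hF, this]

theorem surjOn_cdf (hS : ∀ ω, S ω ∈ Icc (0 : ℝ) 1) (hF : ∀ x, F x = (μ {ω | S ω ≤ x}).toReal)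
    {Q : ℝ → ℝ} (hQ : RightInvOn Q F (Icc 0 1)) : SurjOn F (Icc 0 1) (Icc 0 1) := by
  have hF_neg {x : ℝ} : x < 0 → F x = 0 := cdf_eq_zero_of_neg (fun ω => (hS ω).1) hF
  -- An atom at `0` would leave the values in `(0, F 0)` unattained.
  have hF_zero : F 0 = 0 := by
    have hF0 := cdf_mem_Icc hF 0
    have hp : F 0 / 2 ∈ Icc (0 : ℝ) 1 := ⟨by linarith [hF0.1], by linarith [hF0.2]⟩
    have hFQ : F (Q (F 0 / 2)) = F 0 / 2 := hQ hp
    rcases lt_or_ge (Q (F 0 / 2)) 0 with hneg | hnonneg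
    · linarith [hF_neg hneg]
    · linarith [monotone_of_cdf hF hnonneg, hF0.1]
  intro t ht
  rcases lt_or_ge (Q t) 0 with hneg | hnonneg
  · exact ⟨0, left_mem_Icc.2 zero_le_one, by rw [hF_zero, ← hQ ht, hF_neg hneg]⟩
  rcases le_or_gt (Q t) 1 with hle | hgt
  · exact ⟨Q t, ⟨hnonneg, hle⟩, hQ ht⟩
  · have hF_one (x : ℝ) : 1 ≤ x → F x = 1 := cdf_eq_one_of_one_le (fun ω => (hS ω).2) hF
    exact ⟨1, right_mem_Icc.2 zero_le_one, by rw [hF_one 1 le_rfl, ← hQ ht, hF_one _ hgt.le]⟩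

theorem map_cdf_eq_restrict_Icc (hS : Measurable S) (hS01 : ∀ ω, S ω ∈ Icc (0 : ℝ) 1)
    (hF : ∀ x, F x = (μ {ω | S ω ≤ x}).toReal) (hm : StrictMonoOn F (Icc 0 1))
    (hsurj : SurjOn F (Icc 0 1) (Icc 0 1)) :
    μ.map (fun ω => F (S ω)) = volume.restrict (Icc 0 1) := by
  have hmeas : Measurable fun ω => F (S ω) := (monotone_of_cdf hF).measurable.comp hS
  have := Measure.isProbabilityMeasure_map (μ := μ) hmeas.aemeasurable
  refine Measure.ext_of_Iic _ _ fun t => ?_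
  rw [Measure.map_apply hmeas measurableSet_Iic, Measure.restrict_apply measurableSet_Iic]
  rcases lt_or_ge t 0 with ht0 | ht0
  · have hpre : (fun ω => F (S ω)) ⁻¹' Iic t = ∅ :=
      eq_empty_of_forall_notMem fun ω h => (ht0.trans_le (cdf_mem_Icc hF _).1).not_ge h
    have hIcc : Iic t ∩ Icc (0 : ℝ) 1 = ∅ :=
      eq_empty_of_forall_notMem fun x ⟨h1, h2, _⟩ => (ht0.trans_le h2).not_ge h1
    simp [hpre, hIcc]
  rcases lt_or_ge t 1 with ht1 | ht1
  · obtain ⟨x, hx, rfl⟩ := hsurj ⟨ht0, ht1.le⟩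
    have hpre : (fun ω => F (S ω)) ⁻¹' Iic (F x) = {ω | S ω ≤ x} := by
      ext ω
      exact hm.le_iff_le (hS01 ω) hx
    have hIcc : Iic (F x) ∩ Icc (0 : ℝ) 1 = Icc 0 (F x) := by
      ext y
      simp only [mem_inter_iff, mem_Iic, mem_Icc]
      constructor
      · exact fun ⟨h1, h2, _⟩ => ⟨h2, h1⟩
      · exact fun ⟨h1, h2⟩ => ⟨h2, h1, h2.trans ht1.le⟩
    rw [hpre, hIcc, Real.volume_Icc, sub_zero, hF, ENNReal.ofReal_toReal (measure_ne_top μ _)]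
  · have hpre : (fun ω => F (S ω)) ⁻¹' Iic t = univ :=
      eq_univ_of_forall fun ω => (cdf_mem_Icc hF _).2.trans ht1
    have hIcc : Iic t ∩ Icc (0 : ℝ) 1 = Icc 0 1 :=
      inter_eq_self_of_subset_right fun x hx => hx.2.trans ht1
    simp [hpre, hIcc]

theorem integral_comp_cdf (hS : Measurable S) (hS01 : ∀ ω, S ω ∈ Icc (0 : ℝ) 1)
    (hF : ∀ x, F x = (μ {ω | S ω ≤ x}).toReal) (hm : StrictMonoOn F (Icc 0 1))
    (hsurj : SurjOn F (Icc 0 1) (Icc 0 1)) {g : ℝ → ℝ}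
    (hg : AEStronglyMeasurable g (volume.restrict (Icc 0 1))) :
    ∫ ω, g (F (S ω)) ∂μ = ∫ p in Icc 0 1, g p := by
  have hU := map_cdf_eq_restrict_Icc hS hS01 hF hm hsurj
  rw [← hU]
  exact (integral_map ((monotone_of_cdf hF).measurable.comp hS).aemeasurable (hU ▸ hg)).symm

end CDF

theorem calibration_overall_risk_general
    {Ω : Type*} [MeasurableSpace Ω] (μ : Measure Ω) [IsProbabilityMeasure μ]
    (Sa Sb : Ω → ℝ) (hSa : Measurable Sa) (hSb : Measurable Sb)
    (hSa01 : ∀ ω, Sa ω ∈ Icc (0:ℝ) 1) (hSb01 : ∀ ω, Sb ω ∈ Icc (0:ℝ) 1)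
    (Fa Fb Qa Qb : ℝ → ℝ)
    (hFa : ∀ x, Fa x = (μ {ω | Sa ω ≤ x}).toReal)
    (hFb : ∀ x, Fb x = (μ {ω | Sb ω ≤ x}).toReal)
    (hma : StrictMonoOn Fa (Icc (0:ℝ) 1)) (hmb : StrictMonoOn Fb (Icc (0:ℝ) 1))
    (hQa : ∀ x ∈ Icc (0:ℝ) 1, Qa (Fa x) = x)
    (hQb : ∀ x ∈ Icc (0:ℝ) 1, Qb (Fb x) = x)
    (hQa' : ∀ p ∈ Icc (0:ℝ) 1, Fa (Qa p) = p)
    (hQb' : ∀ p ∈ Icc (0:ℝ) 1, Fb (Qb p) = p)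
    (α : ℝ) (hα : α ∈ Icc (0:ℝ) 1) :
    α * (∫ ω, |(α * Sa ω + (1 - α) * Qb (Fa (Sa ω))) - Sa ω| ∂μ)
      + (1 - α) * (∫ ω, |(α * Qa (Fb (Sb ω)) + (1 - α) * Sb ω) - Sb ω| ∂μ)
      = 2 * α * (1 - α) * ∫ p in Icc (0:ℝ) 1, |Qa p - Qb p| := by
  have hQa_meas : AEMeasurable Qa (volume.restrict (Icc 0 1)) := aemeasurable_restrict_of_monotoneOn
    measurableSet_Icc ((monotone_of_cdf hFa).monotoneOn_of_rightInvOn hQa')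
  have hQb_meas : AEMeasurable Qb (volume.restrict (Icc 0 1)) := aemeasurable_restrict_of_monotoneOn
    measurableSet_Icc ((monotone_of_cdf hFb).monotoneOn_of_rightInvOn hQb')
  have hgap : AEStronglyMeasurable (fun p => |Qa p - Qb p|) (volume.restrict (Icc 0 1)) :=
    (hQa_meas.sub hQb_meas).aestronglyMeasurable.norm
  have hrisk_a : ∫ ω, |(α * Sa ω + (1 - α) * Qb (Fa (Sa ω))) - Sa ω| ∂μ
      = (1 - α) * ∫ p in Icc 0 1, |Qa p - Qb p| := by
    rw [← integral_comp_cdf hSa hSa01 hFa hma (surjOn_cdf hSa01 hFa hQa') hgap,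
      ← integral_const_mul]
    refine integral_congr_ae (ae_of_all _ fun ω => ?_)
    simp only [hQa _ (hSa01 ω), abs_convexComb_sub_left hα.2]
  have hrisk_b : ∫ ω, |(α * Qa (Fb (Sb ω)) + (1 - α) * Sb ω) - Sb ω| ∂μ
      = α * ∫ p in Icc 0 1, |Qa p - Qb p| := by
    rw [← integral_comp_cdf hSb hSb01 hFb hmb (surjOn_cdf hSb01 hFb hQb') hgap,
      ← integral_const_mul]
    refine integral_congr_ae (ae_of_all _ fun ω => ?_)
    simp only [hQb _ (hSb01 ω), abs_convexComb_sub_right hα.1]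
  rw [hrisk_a, hrisk_b]
  ring

/-- the overall expected risk of the quantile calibration,
`P(A=a)·E[|T_a(S_a) − S_a|] + P(A=b)·E[|T_b(S_b) − S_b|]`, equals
`2·α·(1−α)·E[|Q_a(U) − Q_b(U)|]` when `α = P(A=a)` and `U` is uniform on
`[0,1]`. -/
theorem calibration_overall_risk
    {Ω : Type*} [MeasurableSpace Ω] (μ : Measure Ω) [IsProbabilityMeasure μ]
    (Sa Sb : Ω → ℝ) (hSa : Measurable Sa) (hSb : Measurable Sb)
    (hSa01 : ∀ ω, Sa ω ∈ Icc (0:ℝ) 1) (hSb01 : ∀ ω, Sb ω ∈ Icc (0:ℝ) 1)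
    (Fa Fb Qa Qb : ℝ → ℝ)
    (hFa : ∀ x, Fa x = (μ {ω | Sa ω ≤ x}).toReal)
    (hFb : ∀ x, Fb x = (μ {ω | Sb ω ≤ x}).toReal)
    (hca : ContinuousOn Fa (Icc (0:ℝ) 1)) (hcb : ContinuousOn Fb (Icc (0:ℝ) 1))
    (hma : StrictMonoOn Fa (Icc (0:ℝ) 1)) (hmb : StrictMonoOn Fb (Icc (0:ℝ) 1))
    (hQa : ∀ x ∈ Icc (0:ℝ) 1, Qa (Fa x) = x)
    (hQb : ∀ x ∈ Icc (0:ℝ) 1, Qb (Fb x) = x)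
    (hQa' : ∀ p ∈ Icc (0:ℝ) 1, Fa (Qa p) = p)
    (hQb' : ∀ p ∈ Icc (0:ℝ) 1, Fb (Qb p) = p)
    (α : ℝ) (hα : α ∈ Icc (0:ℝ) 1) :
    α * (∫ ω, |(α * Sa ω + (1 - α) * Qb (Fa (Sa ω))) - Sa ω| ∂μ)
      + (1 - α) * (∫ ω, |(α * Qa (Fb (Sb ω)) + (1 - α) * Sb ω) - Sb ω| ∂μ)
      = 2 * α * (1 - α) * ∫ p in Icc (0:ℝ) 1, |Qa p - Qb p| :=
  calibration_overall_risk_general μ Sa Sb hSa hSb hSa01 hSb01 Fa Fb Qa Qb hFa hFb hma hmb hQa hQb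
    hQa' hQb' α hα
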